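/- Let G be the 3×3 matrix with entries G^{ij}(p) = √2 e^{φ} (e^{2φ}+|p|²)^{-1/4} ( e^{φ} δ^{ij} + p^i p^j/(e^{φ}+√(e^{2φ}+|p|²)) ). Then G·Gᵀ = 2 e^{2φ} D[φ], where D^{ij}[φ] = (e^{2φ} δ^{ij} + p^i p^j)/√(e^{2φ}+|p|²). -/

import Mathlib

noncomputable def Dmat (φ : ℝ) (p : EuclideanSpace ℝ (Fin 3)) (i j : Fin 3) : ℝ :=
  (Real.exp (2 * φ) * (if i = j then 1 else 0) + p i * p j) /
    Real.sqrt (Real.exp (2 * φ) + ‖p‖ ^ 2)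

noncomputable def Gmat (φ : ℝ) (p : EuclideanSpace ℝ (Fin 3)) (i j : Fin 3) : ℝ :=
  Real.sqrt 2 * Real.exp φ * (Real.exp (2 * φ) + ‖p‖ ^ 2) ^ (-(1 : ℝ) / 4) *
    (Real.exp φ * (if i = j then 1 else 0) +
      p i * p j / (Real.exp φ + Real.sqrt (Real.exp (2 * φ) + ‖p‖ ^ 2)))

/-!
With `a = e^φ` and `s = √(a² + |p|²)`, the matrix `G` is `c (a I + p pᵀ / (a + s))` with
`c² = 2a² / s`. The symmetric matrix `a I + b p pᵀ` squares to `a² I + (2ab + b²|p|²) p pᵀ`,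
and for `b = 1 / (a + s)` the coefficient `2ab + b²(s² - a²) = (2a + s - a) / (a + s)` is `1`.
So `G Gᵀ = (2a² / s) (a² I + p pᵀ) = 2 e^{2φ} D`.
-/

open Matrix

theorem Matrix.smul_one_add_smul_vecMulVec_mul_self {n R : Type*} [Fintype n] [DecidableEq n]
    [CommRing R] (a b : R) (v : n → R) :
    (a • 1 + b • vecMulVec v v) * (a • 1 + b • vecMulVec v v) =
      a ^ 2 • 1 + (2 * a * b + b ^ 2 * (v ⬝ᵥ v)) • vecMulVec v v := by
  simp only [add_mul, mul_add, smul_mul_smul, one_mul, mul_one, vecMulVec_mul_vecMulVec,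
    vecMulVec_smul, add_smul, mul_smul]
  module

theorem EuclideanSpace.dotProduct_self_eq_norm_sq {n : Type*} [Fintype n]
    (p : EuclideanSpace ℝ n) : p.ofLp ⬝ᵥ p.ofLp = ‖p‖ ^ 2 := by
  rw [← real_inner_self_eq_norm_sq, EuclideanSpace.inner_eq_star_dotProduct, star_trivial]

theorem two_mul_mul_inv_add_inv_sq_mul_eq_one {K : Type*} [Field K] {a s q : K}
    (has : a + s ≠ 0) (hs : s ^ 2 = a ^ 2 + q) : 2 * a * (a + s)⁻¹ + (a + s)⁻¹ ^ 2 * q = 1 := by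
  field_simp
  linear_combination -hs

theorem sq_sqrt_two_mul_mul_rpow_neg_quarter {a E : ℝ} (hE : 0 ≤ E) :
    (√2 * a * E ^ (-(1 : ℝ) / 4)) ^ 2 = 2 * a ^ 2 / √E := by
  rw [mul_pow, mul_pow, Real.sq_sqrt zero_le_two, ← Real.rpow_mul_natCast hE,
    Real.sqrt_eq_rpow, div_eq_mul_inv (2 * a ^ 2), ← Real.rpow_neg hE]
  norm_num

section

variable (φ : ℝ) (p : EuclideanSpace ℝ (Fin 3))

theorem of_Gmat_eq : Matrix.of (Gmat φ p) =
    (√2 * Real.exp φ * (Real.exp (2 * φ) + ‖p‖ ^ 2) ^ (-(1 : ℝ) / 4)) •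
      (Real.exp φ • 1 +
        (Real.exp φ + √(Real.exp (2 * φ) + ‖p‖ ^ 2))⁻¹ • vecMulVec p.ofLp p.ofLp) := by
  ext i j
  simp [Gmat, one_apply, vecMulVec_apply, div_eq_inv_mul, mul_assoc]

theorem of_Dmat_eq : Matrix.of (Dmat φ p) =
    (√(Real.exp (2 * φ) + ‖p‖ ^ 2))⁻¹ • (Real.exp φ ^ 2 • 1 + vecMulVec p.ofLp p.ofLp) := by
  ext i j
  simp [Dmat, one_apply, vecMulVec_apply, div_eq_inv_mul, ← Real.exp_nat_mul, mul_comm]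

end

theorem stmt_8 (φ : ℝ) (p : EuclideanSpace ℝ (Fin 3)) :
    (Matrix.of fun i j => Gmat φ p i j) *
        Matrix.transpose (Matrix.of fun i j => Gmat φ p i j) =
      (2 * Real.exp (2 * φ)) • Matrix.of fun i j => Dmat φ p i j := by
  have hE : 0 ≤ Real.exp (2 * φ) + ‖p‖ ^ 2 := by positivity
  have hexp : Real.exp (2 * φ) = Real.exp φ ^ 2 := by rw [← Real.exp_nat_mul]; norm_num
  have hsq : √(Real.exp (2 * φ) + ‖p‖ ^ 2) ^ 2 = Real.exp φ ^ 2 + p.ofLp ⬝ᵥ p.ofLp := by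
    rw [Real.sq_sqrt hE, EuclideanSpace.dotProduct_self_eq_norm_sq, hexp]
  have hcoef := two_mul_mul_inv_add_inv_sq_mul_eq_one (by positivity) hsq
  rw [of_Gmat_eq, of_Dmat_eq, transpose_smul, transpose_add, transpose_smul, transpose_one,
    transpose_smul, transpose_vecMulVec, smul_mul_smul, smul_one_add_smul_vecMulVec_mul_self, hcoef,
    one_smul, ← sq, sq_sqrt_two_mul_mul_rpow_neg_quarter hE, smul_smul, hexp, div_eq_mul_inv]
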